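/- Let (Ω, F, ℙ) be a probability space with a filtration (F_t)_{t∈ℝ₊} satisfying ⋁_t F_t ⊆ F. For every stopping time τ there exist a totally inaccessible stopping time τ¹ and an accessible stopping time τ² such that ⟦τ⟧ = ⟦τ¹⟧ ∪ ⟦τ²⟧. -/

import Mathlib

open MeasureTheory Set
open scoped NNReal ENNReal


variable {Ω : Type*}

/-- A stopping time with respect to the filtration `𝔽`. -/
def IsStopTime {F : MeasurableSpace Ω} (𝔽 : Filtration ℝ≥0 F) (τ : Ω → ℝ≥0∞) : Prop :=
  ∀ t : ℝ≥0, MeasurableSet[𝔽 t] {ω | τ ω ≤ (t : ℝ≥0∞)}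

/-- A predictable time: a stopping time announced by a nondecreasing sequence of
finite stopping times. -/
def IsPredTime {F : MeasurableSpace Ω} (𝔽 : Filtration ℝ≥0 F) (ρ : Ω → ℝ≥0∞) : Prop :=
  IsStopTime 𝔽 ρ ∧ ∃ ρs : ℕ → Ω → ℝ≥0∞,
    (∀ n, IsStopTime 𝔽 (ρs n)) ∧ (∀ n ω, ρs n ω < ⊤) ∧ (∀ n ω, ρs n ω ≤ ρ ω) ∧
    (∀ n ω, 0 < ρ ω → ρs n ω < ρ ω) ∧ (∀ ω, Monotone fun n => ρs n ω) ∧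
    (∀ ω, Filter.Tendsto (fun n => ρs n ω) Filter.atTop (nhds (ρ ω)))

/-- The graph `⟦τ⟧ ⊆ Ω × ℝ₊` of `τ : Ω → [0,∞]`. -/
def graph (τ : Ω → ℝ≥0∞) : Set (Ω × ℝ≥0) := {p | τ p.1 = (p.2 : ℝ≥0∞)}

/-- The stochastic interval `⟦τ, ∞⟦`. -/
def rayFrom (τ : Ω → ℝ≥0∞) : Set (Ω × ℝ≥0) := {p | τ p.1 ≤ (p.2 : ℝ≥0∞)}

/-- The stochastic interval `⟦ρ, τ⟧`. -/
def stInterval (ρ τ : Ω → ℝ≥0∞) : Set (Ω × ℝ≥0) :=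
  {p | ρ p.1 ≤ (p.2 : ℝ≥0∞) ∧ (p.2 : ℝ≥0∞) ≤ τ p.1}

/-- The predictable σ-algebra on `Ω × ℝ₊`. -/
def predictableSigma {F : MeasurableSpace Ω} (𝔽 : Filtration ℝ≥0 F) :
    MeasurableSpace (Ω × ℝ≥0) :=
  MeasurableSpace.generateFrom {s | ∃ ρ, IsPredTime 𝔽 ρ ∧ s = rayFrom ρ}

/-- The optional σ-algebra on `Ω × ℝ₊`. -/
def optionalSigma {F : MeasurableSpace Ω} (𝔽 : Filtration ℝ≥0 F) :
    MeasurableSpace (Ω × ℝ≥0) :=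
  MeasurableSpace.generateFrom {s | ∃ τ, IsStopTime 𝔽 τ ∧ s = rayFrom τ}

/-- The debut of a set `S ⊆ Ω × ℝ₊`. -/
noncomputable def debut (S : Set (Ω × ℝ≥0)) (ω : Ω) : ℝ≥0∞ :=
  ⨅ (t : ℝ≥0) (_ : (ω, t) ∈ S), (t : ℝ≥0∞)

/-- Projection of a subset of `Ω × ℝ₊` onto `Ω`. -/
def projOmega (S : Set (Ω × ℝ≥0)) : Set Ω := Prod.fst '' S

/-- The outer measure `ℙ*` induced by `ℙ`. -/
noncomputable def pstar {F : MeasurableSpace Ω} (P : Measure Ω) (A : Set Ω) : ℝ≥0∞ :=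
  ⨅ (E : Set Ω) (_ : A ⊆ E) (_ : MeasurableSet E), P E

/-- A totally inaccessible stopping time: `ℙ(τ = ρ < ∞) = 0` for every predictable
time `ρ`. -/
def IsTotallyInaccessible {Ω : Type*} {F : MeasurableSpace Ω} (𝔽 : Filtration ℝ≥0 F)
    (P : Measure Ω) (τ : Ω → ℝ≥0∞) : Prop :=
  IsStopTime 𝔽 τ ∧ ∀ ρ : Ω → ℝ≥0∞, IsPredTime 𝔽 ρ → P {ω | τ ω = ρ ω ∧ τ ω < ⊤} = 0

/-- An accessible stopping time: its graph is covered by countably many graphs of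
predictable times. -/
def IsAccessibleTime {Ω : Type*} {F : MeasurableSpace Ω} (𝔽 : Filtration ℝ≥0 F)
    (τ : Ω → ℝ≥0∞) : Prop :=
  IsStopTime 𝔽 τ ∧ ∃ ρs : ℕ → Ω → ℝ≥0∞,
    (∀ m, IsPredTime 𝔽 (ρs m)) ∧ graph τ ⊆ ⋃ m, graph (ρs m)

/-!
Let `N = ⋃ₙ {τ = ρₙ}` be an essential union of the sets `{τ = ρ}`, `ρ` predictable: every
`{τ = ρ} \ N` is null. It exists because `ℙ` is finite, so the supremum of `ℙ (⋃_{ρ ∈ I} {τ = ρ})`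
over countable families `I` is attained. As a countable union of sets `{τ = ρₙ}`, `N` lies in
`𝓕_τ`, hence `τ` restricted to `N` and to `Nᶜ` (and `∞` elsewhere) are stopping times. The
first has its graph covered by the `⟦ρₙ⟧`; the second meets each `⟦ρ⟧` only on `{τ = ρ} \ N`.
-/

namespace MeasureTheory

theorem exists_countable_measure_sdiff_biUnion_eq_zero {ι : Type*} {m : MeasurableSpace Ω}
    (μ : Measure Ω) [IsFiniteMeasure μ] {s : ι → Set Ω} (hs : ∀ i, NullMeasurableSet (s i) μ) :
    ∃ I : Set ι, I.Countable ∧ ∀ i, μ (s i \ ⋃ j ∈ I, s j) = 0 := by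
  set S := (fun I : Set ι => μ (⋃ j ∈ I, s j)) '' {I | I.Countable}
  obtain ⟨u, -, hu, huS⟩ :=
    exists_seq_tendsto_sSup (S := S) ⟨_, ∅, countable_empty, rfl⟩ (OrderTop.bddAbove S)
  choose I hI hIu using huS
  set J := ⋃ k, I k
  have hJ : J.Countable := countable_iUnion hI
  have hmax : ∀ K : Set ι, K.Countable → μ (⋃ j ∈ K, s j) ≤ μ (⋃ j ∈ J, s j) := fun K hK =>
    (le_sSup (show _ ∈ S from ⟨K, hK, rfl⟩)).trans <| le_of_tendsto' hu fun k =>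
      hIu k ▸ measure_mono (biUnion_subset_biUnion_left (subset_iUnion I k))
  refine ⟨J, hJ, fun i => ?_⟩
  rw [measure_sdiff' _ (.biUnion hJ fun j _ => hs j) (measure_ne_top _ _), tsub_eq_zero_iff_le,
    ← biUnion_insert]
  exact hmax _ (hJ.insert i)

theorem exists_seq_measure_sdiff_iUnion_eq_zero {ι : Type*} [Nonempty ι] {m : MeasurableSpace Ω}
    (μ : Measure Ω) [IsFiniteMeasure μ] {s : ι → Set Ω} (hs : ∀ i, NullMeasurableSet (s i) μ) :
    ∃ f : ℕ → ι, ∀ i, μ (s i \ ⋃ n, s (f n)) = 0 := by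
  obtain ⟨I, hI, hnull⟩ := exists_countable_measure_sdiff_biUnion_eq_zero μ hs
  obtain ⟨f, hf⟩ := (hI.insert (Classical.arbitrary ι)).exists_eq_range (insert_nonempty _ _)
  refine ⟨f, fun i => measure_mono_null (sdiff_subset_sdiff_right ?_) (hnull i)⟩
  rw [← biUnion_range, ← hf]
  exact biUnion_subset_biUnion_left (subset_insert _ _)

theorem IsStoppingTime.piecewise_top {ι : Type*} [Preorder ι] {m : MeasurableSpace Ω}
    {f : Filtration ι m} {τ : Ω → WithTop ι} (hτ : IsStoppingTime f τ) {s : Set Ω}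
    [DecidablePred (· ∈ s)] (hs : MeasurableSet[hτ.measurableSpace] s) :
    IsStoppingTime f (s.piecewise τ fun _ => ⊤) := by
  intro i
  convert hs.2 i using 1
  ext ω
  by_cases hω : ω ∈ s <;> simp [hω]

end MeasureTheory

section StopTime

variable {F : MeasurableSpace Ω} {𝔽 : Filtration ℝ≥0 F}

/-- `ℝ≥0∞` is `WithTop ℝ≥0`, so `IsStopTime` is literally Mathlib's `IsStoppingTime`. -/
theorem IsStopTime.isStoppingTime {τ : Ω → ℝ≥0∞} (hτ : IsStopTime 𝔽 τ) :
    IsStoppingTime 𝔽 τ :=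
  hτ

variable (𝔽) in
theorem isPredTime_top : IsPredTime 𝔽 (fun _ : Ω => (⊤ : ℝ≥0∞)) := by
  refine ⟨fun t => by simp, fun n _ => (n : ℝ≥0∞), fun n t => .const _, fun n _ => ?_,
    fun _ _ => le_top, fun n _ _ => ?_, fun _ _ _ h => Nat.cast_le.2 h,
    fun _ => ENNReal.tendsto_nat_nhds_top⟩ <;> exact ENNReal.natCast_lt_top n

end StopTime

section Graph

variable (τ : Ω → ℝ≥0∞) (s : Set Ω) [DecidablePred (· ∈ s)]

theorem graph_eq_union_piecewise_top :
    graph τ = graph (sᶜ.piecewise τ fun _ => ⊤) ∪ graph (s.piecewise τ fun _ => ⊤) := by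
  ext ⟨ω, t⟩
  by_cases hω : ω ∈ s <;> simp [graph, hω]

theorem setOf_piecewise_top_eq_lt_top_subset (ρ : Ω → ℝ≥0∞) :
    {ω | s.piecewise τ (fun _ => ⊤) ω = ρ ω ∧ s.piecewise τ (fun _ => ⊤) ω < ⊤} ⊆
      {ω | τ ω = ρ ω} ∩ s := by
  intro ω ⟨heq, hlt⟩
  by_cases hω : ω ∈ s
  · simp_all
  · simp [hω] at hlt

end Graph

theorem graph_piecewise_top_subset_iUnion_graph (τ : Ω → ℝ≥0∞) (ρ : ℕ → Ω → ℝ≥0∞)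
    [DecidablePred (· ∈ ⋃ n, {ω | τ ω = ρ n ω})] :
    graph ((⋃ n, {ω | τ ω = ρ n ω}).piecewise τ fun _ => ⊤) ⊆ ⋃ n, graph (ρ n) := by
  rintro ⟨ω, t⟩ hωt
  by_cases hω : ω ∈ ⋃ n, {ω | τ ω = ρ n ω}
  · obtain ⟨n, hn⟩ := mem_iUnion.1 hω
    simp only [graph, mem_ofPred_eq, piecewise_eq_of_mem _ _ _ hω] at hωt hn
    exact mem_iUnion.2 ⟨n, show ρ n ω = t from hn ▸ hωt⟩
  · simp [graph, hω] at hωt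

/-- every stopping time decomposes as a totally inaccessible part and an
accessible part: `⟦τ⟧ = ⟦τ¹⟧ ∪ ⟦τ²⟧`. -/
theorem stoppingTime_decomposition {Ω : Type*} {F : MeasurableSpace Ω}
    (𝔽 : Filtration ℝ≥0 F) (P : Measure Ω) [IsProbabilityMeasure P]
    (τ : Ω → ℝ≥0∞) (hτ : IsStopTime 𝔽 τ) :
    ∃ τ₁ τ₂ : Ω → ℝ≥0∞, IsTotallyInaccessible 𝔽 P τ₁ ∧ IsAccessibleTime 𝔽 τ₂ ∧
      graph τ = graph τ₁ ∪ graph τ₂ := by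
  classical
  have hτ' := hτ.isStoppingTime
  have : Nonempty {ρ // IsPredTime 𝔽 ρ} := ⟨⟨_, isPredTime_top 𝔽⟩⟩
  obtain ⟨ρs, hnull⟩ := exists_seq_measure_sdiff_iUnion_eq_zero P
    (s := fun ρ : {ρ // IsPredTime 𝔽 ρ} => {ω | τ ω = ρ.1 ω})
    fun ρ => (hτ'.measurableSpace_le _ (hτ'.measurableSet_eq_stopping_time ρ.2.1)).nullMeasurableSet
  set N := ⋃ n, {ω | τ ω = (ρs n).1 ω}
  have hN : MeasurableSet[hτ'.measurableSpace] N :=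
    .iUnion fun n => hτ'.measurableSet_eq_stopping_time (ρs n).2.1
  refine ⟨Nᶜ.piecewise τ fun _ => ⊤, N.piecewise τ fun _ => ⊤,
    ⟨hτ'.piecewise_top hN.compl, fun ρ hρ => ?_⟩,
    ⟨hτ'.piecewise_top hN, fun n => (ρs n).1, fun n => (ρs n).2,
      graph_piecewise_top_subset_iUnion_graph τ _⟩,
    graph_eq_union_piecewise_top τ N⟩
  exact measure_mono_null (setOf_piecewise_top_eq_lt_top_subset τ Nᶜ ρ) (hnull ⟨ρ, hρ⟩)
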